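/- For all natural numbers m, n, k, a with m ≥ 1, k ≥ 1, n ≥ 1 and 1 ≤ a ≤ 9, the equation C_n · C_{n+1} ⋯ C_{n+k} = a·(10^m−1)/9 has no solution. -/

import Mathlib

def C : ℕ → ℕ
  | 0 => 1
  | 1 => 3
  | n + 2 => 6 * C (n + 1) - C n

abbrev Rm := ZMod 280

lemma Cgrow : ∀ n, 1 ≤ C n ∧ C n < C (n+1) := by
  intro n
  induction n with
  | zero => norm_num [C]
  | succ n ih =>
    show 1 ≤ C (n+1) ∧ C (n+1) < C (n+2)
    have hdef : C (n+2) = 6 * C (n+1) - C n := rfl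
    omega

lemma Cpos (n : ℕ) : 1 ≤ C n := (Cgrow n).1

lemma Cmono : StrictMono C := strictMono_nat_of_lt_succ (fun n => (Cgrow n).2)

lemma Ceq (n : ℕ) : C (n+2) + C n = 6 * C (n+1) := by
  have hdef : C (n+2) = 6 * C (n+1) - C n := rfl
  have h1 := (Cgrow n).2
  omega

lemma Ccast (n : ℕ) : (C (n+2) : Rm) + C n = 6 * C (n+1) := by
  have := congrArg (fun x : ℕ => (x : Rm)) (Ceq n)
  push_cast at this
  linear_combination this

lemma CperAux : ∀ n, ((C (n+6) : Rm) = C n) ∧ ((C (n+7) : Rm) = C (n+1)) := by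
  intro n
  induction n with
  | zero => constructor <;> decide
  | succ n ih =>
    refine ⟨ih.2, ?_⟩
    have h1 : (C (n+8) : Rm) + C (n+6) = 6 * C (n+7) := Ccast (n+6)
    have h2 : (C (n+2) : Rm) + C n = 6 * C (n+1) := Ccast n
    rw [ih.1, ih.2] at h1
    linear_combination h1 - h2

lemma Cper (n : ℕ) : (C (n+6) : Rm) = C n := (CperAux n).1

lemma prod6 : ∀ n, (∏ i ∈ Finset.range 6, (C (n+i) : Rm)) = 179 := by
  intro n
  induction n with
  | zero => decide
  | succ n ih =>
    have step : (∏ i ∈ Finset.range 6, (C (n+1+i) : Rm))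
        = ∏ i ∈ Finset.range 6, (C (n+i) : Rm) := by
      have h5 : n + 1 + 5 = n + 6 := by omega
      have hre : (∏ i ∈ Finset.range 5, (C (n+1+i) : Rm))
          = ∏ i ∈ Finset.range 5, (C (n+(i+1)) : Rm) := by
        refine Finset.prod_congr rfl (fun i _ => ?_)
        rw [show n+1+i = n+(i+1) by omega]
      conv_lhs => rw [Finset.prod_range_succ]
      conv_rhs => rw [Finset.prod_range_succ']
      rw [h5, Cper, hre]
      simp
    rw [step, ih]

lemma prod6t : ∀ t n, (∏ i ∈ Finset.range (6*t), (C (n+i) : Rm)) = 179 ^ t := by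
  intro t
  induction t with
  | zero => simp
  | succ t ih =>
    intro n
    rw [show 6*(t+1) = 6*t+6 by ring, Finset.prod_range_add, ih n, pow_succ]
    congr 1
    have : (∏ i ∈ Finset.range 6, (C (n+(6*t+i)) : Rm))
        = ∏ i ∈ Finset.range 6, (C ((n+6*t)+i) : Rm) := by
      refine Finset.prod_congr rfl (fun i _ => ?_)
      rw [show n+(6*t+i) = (n+6*t)+i by omega]
    rw [this, prod6]

lemma prod36 (x : ℕ) : (∏ i ∈ Finset.range 36, (C (x+i) : Rm)) = 1 := by
  have := prod6t 6 x
  norm_num at this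
  rw [this]
  decide

lemma kred : ∀ t n k, (∏ i ∈ Finset.range (k + 36*t + 1), (C (n+i) : Rm))
    = ∏ i ∈ Finset.range (k+1), (C (n+i) : Rm) := by
  intro t
  induction t with
  | zero => intro n k; norm_num
  | succ t ih =>
    intro n k
    rw [show k + 36*(t+1) + 1 = (k + 36*t + 1) + 36 by ring, Finset.prod_range_add]
    have h2 : (∏ i ∈ Finset.range 36, (C (n+(k+36*t+1+i)) : Rm))
        = ∏ i ∈ Finset.range 36, (C ((n+k+36*t+1)+i) : Rm) := by
      refine Finset.prod_congr rfl (fun i _ => ?_)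
      rw [show n+(k+36*t+1+i) = (n+k+36*t+1)+i by omega]
    rw [h2, prod36, mul_one, ih]

lemma Cper6 : ∀ q r, (C (6*q + r) : Rm) = C r := by
  intro q
  induction q with
  | zero => intro r; norm_num
  | succ q ih =>
    intro r
    have h1 : (C (6*(q+1)+r) : Rm) = (C ((6*q+r)+6) : Rm) := by
      rw [show 6*(q+1)+r = (6*q+r)+6 by ring]
    rw [h1, Cper, ih]

def Tb : ℕ → ℕ := fun x => [1,3,17,99,17,3].getD (x % 6) 0

lemma hTb : ∀ x, (C x : Rm) = (Tb x : Rm) := by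
  intro x
  obtain ⟨q, r, hr, rfl⟩ : ∃ q r, r < 6 ∧ x = 6*q + r :=
    ⟨x/6, x%6, Nat.mod_lt _ (by norm_num), by omega⟩
  rw [Cper6]
  have hmod : (6*q + r) % 6 = r := by omega
  unfold Tb
  rw [hmod]
  interval_cases r <;> decide

def fp : ℕ → ℕ → Rm
  | r, 0 => (Tb r : Rm)
  | r, (L+1) => fp r L * (Tb (r + (L+1)) : Rm)

lemma hfp : ∀ r L, (∏ i ∈ Finset.range (L+1), (C (r+i) : Rm)) = fp r L := by
  intro r L
  induction L with
  | zero => simp [fp, hTb]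
  | succ L ih =>
    rw [Finset.prod_range_succ, ih, hTb]
    rfl

set_option synthInstance.maxSize 2000 in
set_option synthInstance.maxHeartbeats 1000000 in
set_option maxHeartbeats 4000000 in
lemma key : ∀ r : ℕ, r < 6 → ∀ L : ℕ, L < 36 → ∀ v : ℕ, v < 6 → ∀ a : ℕ, a < 10 →
    a ≠ 0 → 9 * fp r L ≠ (a : Rm) * ((10:Rm)^(3+v) - 1) := by decide

lemma pow9 : ∀ s, (10:Rm)^(s+9) = (10:Rm)^(s+3) := by
  intro s
  induction s with
  | zero => decide
  | succ s ih =>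
    rw [show s+1+9 = (s+9)+1 by omega, pow_succ, ih, ← pow_succ]

lemma mred : ∀ s, (10:Rm)^(3+s) = (10:Rm)^(3 + s % 6) := by
  intro s
  induction s using Nat.strong_induction_on with
  | _ s ih =>
    rcases Nat.lt_or_ge s 6 with h | h
    · rw [Nat.mod_eq_of_lt h]
    · rw [show 3 + s = (s - 6) + 9 by omega, pow9,
        show s - 6 + 3 = 3 + (s-6) by omega, ih (s-6) (by omega),
        show (s-6) % 6 = s % 6 by omega]

theorem stmt4 (m n k a : ℕ) (hm : 1 ≤ m) (hk : 1 ≤ k) (hn : 1 ≤ n)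
    (ha1 : 1 ≤ a) (ha9 : a ≤ 9) :
    9 * (∏ i ∈ Finset.range (k + 1), C (n + i)) ≠ a * (10 ^ m - 1) := by
  intro h
  rcases Nat.lt_or_ge m 3 with hm3 | hm3
  · -- small m : size argument
    have hclaim : (∏ i ∈ Finset.range (k+1), C (n+i)) = 51 ∨
        1683 ≤ ∏ i ∈ Finset.range (k+1), C (n+i) := by
      rcases Nat.lt_or_ge k 2 with hk2 | hk2
      · -- k = 1
        have hk1 : k = 1 := by omega
        subst hk1
        have h2 : (∏ i ∈ Finset.range 2, C (n+i)) = C n * C (n+1) := by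
          simp [Finset.prod_range_succ]
        rcases Nat.lt_or_ge n 2 with hn2 | hn2
        · have hn1 : n = 1 := by omega
          subst hn1
          left
          rw [h2]
          rfl
        · right
          rw [h2]
          have e1 : 17 ≤ C n := by
            have : C 2 ≤ C n := Cmono.monotone hn2
            simpa [show C 2 = 17 from rfl] using this
          have e2 : 99 ≤ C (n+1) := by
            have : C 3 ≤ C (n+1) := Cmono.monotone (by omega)
            simpa [show C 3 = 99 from rfl] using this
          calc 1683 = 17 * 99 := by norm_num
            _ ≤ C n * C (n+1) := Nat.mul_le_mul e1 e2
      · -- k ≥ 2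
        right
        obtain ⟨j, rfl⟩ : ∃ j, k = 2 + j := ⟨k - 2, by omega⟩
        rw [show 2 + j + 1 = 3 + j by ring, Finset.prod_range_add]
        have h3 : (∏ i ∈ Finset.range 3, C (n+i)) = C n * C (n+1) * C (n+2) := by
          simp [Finset.prod_range_succ, mul_assoc]
        have e1 : 3 ≤ C n := by
          have : C 1 ≤ C n := Cmono.monotone hn
          simpa [show C 1 = 3 from rfl] using this
        have e2 : 17 ≤ C (n+1) := by
          have : C 2 ≤ C (n+1) := Cmono.monotone (by omega)
          simpa [show C 2 = 17 from rfl] using this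
        have e3 : 99 ≤ C (n+2) := by
          have : C 3 ≤ C (n+2) := Cmono.monotone (by omega)
          simpa [show C 3 = 99 from rfl] using this
        have hrest : 1 ≤ ∏ i ∈ Finset.range j, C (n+(3+i)) :=
          Finset.one_le_prod' (fun i _ => Cpos _)
        calc 1683 ≤ 3 * 17 * 99 := by norm_num
          _ ≤ C n * C (n+1) * C (n+2) :=
            Nat.mul_le_mul (Nat.mul_le_mul e1 e2) e3
          _ = (∏ i ∈ Finset.range 3, C (n+i)) := h3.symm
          _ ≤ (∏ i ∈ Finset.range 3, C (n+i)) * ∏ i ∈ Finset.range j, C (n+(3+i)) :=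
            Nat.le_mul_of_pos_right _ hrest
    interval_cases m <;> (norm_num at h; rcases hclaim with h' | h' <;> omega)
  · -- m ≥ 3 : modular argument mod 280
    have h10 : 1 ≤ 10 ^ m := Nat.one_le_pow _ _ (by norm_num)
    have hc : ((9 * ∏ i ∈ Finset.range (k+1), C (n+i) : ℕ) : Rm)
        = ((a * (10^m - 1) : ℕ) : Rm) := by rw [h]
    rw [Nat.cast_mul, Nat.cast_mul, Nat.cast_sub h10, Nat.cast_prod] at hc
    push_cast at hc
    have e1 : (∏ i ∈ Finset.range (k+1), (C (n+i) : Rm))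
        = ∏ i ∈ Finset.range (k+1), (C (n % 6 + i) : Rm) := by
      refine Finset.prod_congr rfl (fun i _ => ?_)
      conv_lhs => rw [show n + i = 6*(n/6) + (n%6 + i) by omega]
      rw [Cper6]
    rw [e1] at hc
    rw [show k + 1 = (k % 36) + 36*(k/36) + 1 by omega, kred, hfp] at hc
    rw [show m = 3 + (m - 3) by omega, mred] at hc
    exact key (n % 6) (Nat.mod_lt _ (by norm_num)) (k % 36)
      (Nat.mod_lt _ (by norm_num)) ((m-3) % 6) (Nat.mod_lt _ (by norm_num))
      a (by omega) (by omega) hc
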